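/- arXiv:1403.7820 — 2 statements merged into one kernel-verified Lean document; each statement's English description precedes it below -/
import Mathlib

section
/- For the quadratic form T(β) = Σ_{i=1}^{n} β_i² − Σ_{i=1}^{n-1} β_i β_{i+1} + β_1 β_n on ℤⁿ (n ≥ 3), the set of positive roots of T equals the set of positive roots of the Aₙ root system {α_i + α_{i+1} + ⋯ + α_j : 1 ≤ i ≤ j ≤ n} with the single root α_1 + α_2 + ⋯ + α_n removed. -/
/-!
Pad `β` with zeros to `f = (0, β₁, …, βₙ, 0)`. Then `2 T(β) = Σₖ (f_{k+1} - f_k)² + 2 β₁ βₙ`.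
Since `|Δf| ≤ (Δf)²` for integers and `f` climbs from `0` to each of its values and back to `0`,
the quadratic variation `Σₖ (f_{k+1} - f_k)²` is at least `2 |f_c|` for every `c`. Hence for
`β ≥ 0` with `T(β) = 1` we get `β₁ βₙ = 0` and variation exactly `2`; then `f` only takes
the values `0, 1`, and a pattern `1, 0, 1` would cost variation `4`, so `β` is the indicator of
an interval, which cannot be the full one since `β₁ βₙ = 0`. Conversely an interval indicator has
variation `2`.
-/

open Finset

def quadVariation (f : ℕ → ℤ) (a b : ℕ) : ℤ := ∑ k ∈ Ico a b, (f (k + 1) - f k) ^ 2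

namespace quadVariation

variable {f : ℕ → ℤ} {a b c N : ℕ}

theorem add_consecutive (hab : a ≤ b) (hbc : b ≤ c) :
    quadVariation f a b + quadVariation f b c = quadVariation f a c :=
  sum_Ico_consecutive _ hab hbc

theorem abs_sub_le (hab : a ≤ b) : |f b - f a| ≤ quadVariation f a b :=
  calc |f b - f a| = |∑ k ∈ Ico a b, (f (k + 1) - f k)| := by rw [sum_Ico_sub f hab]
    _ ≤ ∑ k ∈ Ico a b, |f (k + 1) - f k| := abs_sum_le_sum_abs _ _
    _ ≤ quadVariation f a b := sum_le_sum fun k _ => by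
      rw [Int.abs_eq_natAbs]; exact Int.natAbs_le_self_sq _

theorem eq_two_mul_of_zero_ends {n : ℕ} (h0 : f 0 = 0) (hn : f (n + 2) = 0) :
    quadVariation f 0 (n + 2) =
      2 * (∑ k ∈ range (n + 1), f (k + 1) ^ 2 - ∑ k ∈ range n, f (k + 1) * f (k + 2)) := by
  have hexpand : quadVariation f 0 (n + 2) = ∑ k ∈ range (n + 2), f (k + 1) ^ 2
      + ∑ k ∈ range (n + 2), f k ^ 2 - 2 * ∑ k ∈ range (n + 2), f k * f (k + 1) := by
    rw [quadVariation, ← range_eq_Ico, mul_sum, ← sum_add_distrib, ← sum_sub_distrib]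
    exact sum_congr rfl fun k _ => by ring
  have e₁ := sum_range_succ (fun k => f (k + 1) ^ 2) (n + 1)
  have e₂ := sum_range_succ' (fun k => f k ^ 2) (n + 1)
  have e₃ := sum_range_succ' (fun k => f k * f (k + 1)) (n + 1)
  have e₄ := sum_range_succ (fun k => f (k + 1) * f (k + 2)) n
  simp only [h0, hn] at e₁ e₂ e₃ e₄ ⊢
  linear_combination hexpand + e₁ + e₂ - 2 * e₃ - 2 * e₄

theorem two_mul_abs_le (h0 : f 0 = 0) (hN : f N = 0) (hc : c ≤ N) :
    2 * |f c| ≤ quadVariation f 0 N := by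
  have hleft := abs_sub_le (f := f) c.zero_le
  have hright := abs_sub_le (f := f) hc
  rw [h0, sub_zero] at hleft
  rw [hN, zero_sub, abs_neg] at hright
  rw [← add_consecutive c.zero_le hc]
  linarith

theorem four_le_of_gap (h0 : f 0 = 0) (hN : f N = 0) {i k j : ℕ} (hik : i ≤ k) (hkj : k ≤ j)
    (hjN : j ≤ N) (hi : f i = 1) (hk : f k = 0) (hj : f j = 1) : 4 ≤ quadVariation f 0 N := by
  have h₁ := abs_sub_le (f := f) i.zero_le
  have h₂ := abs_sub_le (f := f) hik
  have h₃ := abs_sub_le (f := f) hkj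
  have h₄ := abs_sub_le (f := f) hjN
  rw [← add_consecutive i.zero_le (hik.trans (hkj.trans hjN)),
    ← add_consecutive hik (hkj.trans hjN), ← add_consecutive hkj hjN]
  simp only [h0, hN, hi, hk, hj] at h₁ h₂ h₃ h₄
  norm_num at h₁ h₂ h₃ h₄
  linarith

theorem eq_two_of_indicator (ha : 0 < a) (hab : a ≤ b) (hbN : b < N)
    (hf : ∀ k ≤ N, f k = if a ≤ k ∧ k ≤ b then 1 else 0) : quadVariation f 0 N = 2 := by
  have hstep : ∀ k ∈ Ico 0 N,
      (f (k + 1) - f k) ^ 2 = (if k = a - 1 then 1 else 0) + (if k = b then 1 else 0) := by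
    intro k hk
    rw [mem_Ico] at hk
    rw [hf k (by omega), hf (k + 1) (by omega)]
    split_ifs <;> norm_num <;> omega
  rw [quadVariation, sum_congr rfl hstep, sum_add_distrib, sum_ite_eq', sum_ite_eq']
  simp only [mem_Ico]
  split_ifs <;> norm_num <;> omega

theorem exists_indicator_of_eq_two (hf : ∀ k ≤ N, 0 ≤ f k) (h0 : f 0 = 0) (hN : f N = 0)
    (hV : quadVariation f 0 N = 2) :
    ∃ a b, 0 < a ∧ a ≤ b ∧ b < N ∧ ∀ k ≤ N, f k = if a ≤ k ∧ k ≤ b then 1 else 0 := by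
  have hval : ∀ k ≤ N, f k = 0 ∨ f k = 1 := fun k hk => by
    have := two_mul_abs_le h0 hN hk
    rw [abs_of_nonneg (hf k hk)] at this
    have := hf k hk
    omega
  have hgap : ∀ i k j, i ≤ k → k ≤ j → j ≤ N → f i = 1 → f j = 1 → f k = 1 := by
    intro i k j hik hkj hjN hi hj
    refine (hval k (hkj.trans hjN)).resolve_left fun hk => ?_
    have := four_le_of_gap h0 hN hik hkj hjN hi hk hj
    omega
  set S := (range (N + 1)).filter (f · = 1)
  have hmem : ∀ k, k ∈ S ↔ k ≤ N ∧ f k = 1 := by simp [S]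
  have hS : S.Nonempty := by
    by_contra hempty
    have hzero : ∀ k ≤ N, f k = 0 := fun k hk =>
      (hval k hk).resolve_right fun h1 => hempty ⟨k, (hmem k).2 ⟨hk, h1⟩⟩
    have : quadVariation f 0 N = 0 := sum_eq_zero fun k hk => by
      rw [mem_Ico] at hk
      rw [hzero k (by omega), hzero (k + 1) (by omega)]
      norm_num
    omega
  obtain ⟨haN, ha⟩ := (hmem _).1 (S.min'_mem hS)
  obtain ⟨hbN, hb⟩ := (hmem _).1 (S.max'_mem hS)
  refine ⟨S.min' hS, S.max' hS, Nat.pos_of_ne_zero fun h => ?_, S.min'_le_max' hS,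
    hbN.lt_of_ne fun h => ?_, fun k hk => ?_⟩
  · rw [h, h0] at ha; exact zero_ne_one ha
  · rw [h, hN] at hb; exact zero_ne_one hb
  split_ifs with hk'
  · exact hgap _ k _ hk'.1 hk'.2 hbN ha hb
  · exact (hval k hk).resolve_right fun h1 =>
      hk' ⟨S.min'_le k ((hmem k).2 ⟨hk, h1⟩), S.le_max' k ((hmem k).2 ⟨hk, h1⟩)⟩

end quadVariation

section EulerForm

variable {m : ℕ}

def eulerForm (β : Fin (m + 1) → ℤ) : ℤ :=
  ∑ k, β k ^ 2 - ∑ k : Fin m, β k.castSucc * β k.succ + β 0 * β (Fin.last m)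

def zeroPad (β : Fin (m + 1) → ℤ) (k : ℕ) : ℤ :=
  if h : 0 < k ∧ k ≤ m + 1 then β ⟨k - 1, by omega⟩ else 0

variable (β : Fin (m + 1) → ℤ)

@[simp]
theorem zeroPad_zero : zeroPad β 0 = 0 := dif_neg (by omega)

theorem zeroPad_of_lt {k : ℕ} (hk : m + 1 < k) : zeroPad β k = 0 :=
  dif_neg (by omega)

@[simp]
theorem zeroPad_succ (k : Fin (m + 1)) : zeroPad β (k + 1) = β k := by
  simp [zeroPad, k.is_le]

theorem zeroPad_nonneg (hβ : ∀ k, 0 ≤ β k) (k : ℕ) : 0 ≤ zeroPad β k := by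
  unfold zeroPad
  split_ifs
  exacts [hβ _, le_rfl]

theorem two_mul_eulerForm :
    2 * eulerForm β = quadVariation (zeroPad β) 0 (m + 2) + 2 * (β 0 * β (Fin.last m)) := by
  have hsq : ∑ k, β k ^ 2 = ∑ k ∈ range (m + 1), zeroPad β (k + 1) ^ 2 := by
    rw [← Fin.sum_univ_eq_sum_range (fun k => zeroPad β (k + 1) ^ 2)]; simp
  have hprod : ∑ k : Fin m, β k.castSucc * β k.succ =
      ∑ k ∈ range m, zeroPad β (k + 1) * zeroPad β (k + 2) := by
    rw [← Fin.sum_univ_eq_sum_range (fun k => zeroPad β (k + 1) * zeroPad β (k + 2))]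
    refine sum_congr rfl fun k _ => ?_
    rw [← zeroPad_succ β k.castSucc, ← zeroPad_succ β k.succ]; rfl
  rw [eulerForm, hsq, hprod,
    quadVariation.eq_two_mul_of_zero_ends (zeroPad_zero β) (zeroPad_of_lt β (by omega))]
  ring

theorem eulerForm_eq_one_iff (hβ : ∀ k, 0 ≤ β k) :
    eulerForm β = 1 ↔ β 0 * β (Fin.last m) = 0 ∧ quadVariation (zeroPad β) 0 (m + 2) = 2 := by
  have hform := two_mul_eulerForm β
  refine ⟨fun h => ?_, fun ⟨hp, hV⟩ => by linarith⟩
  have hp : 0 ≤ β 0 * β (Fin.last m) := mul_nonneg (hβ 0) (hβ _)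
  have hp0 : β 0 * β (Fin.last m) = 0 := by
    by_contra hne
    have hV := quadVariation.two_mul_abs_le (zeroPad_zero β) (zeroPad_of_lt β (by omega))
      (show 1 ≤ m + 2 by omega)
    rw [show zeroPad β 1 = β 0 from zeroPad_succ β 0] at hV
    have := Int.one_le_abs (left_ne_zero_of_mul hne)
    have := lt_of_le_of_ne hp (Ne.symm hne)
    linarith
  exact ⟨hp0, by linarith⟩

theorem quadVariation_zeroPad_eq_two_iff (hβ : ∀ k, 0 ≤ β k) :
    quadVariation (zeroPad β) 0 (m + 2) = 2 ↔
      ∃ i j : Fin (m + 1), i ≤ j ∧ β = fun k => if i ≤ k ∧ k ≤ j then 1 else 0 := by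
  constructor
  · intro hV
    obtain ⟨a, b, ha, hab, hb, hf⟩ := quadVariation.exists_indicator_of_eq_two
      (fun k _ => zeroPad_nonneg β hβ k) (zeroPad_zero β) (zeroPad_of_lt β (by omega)) hV
    refine ⟨⟨a - 1, by omega⟩, ⟨b - 1, by omega⟩, Fin.mk_le_mk.2 (by omega),
      funext fun k => ?_⟩
    rw [← zeroPad_succ β k, hf _ (by omega)]
    simp only [Fin.le_def]
    exact if_congr (by omega) rfl rfl
  · rintro ⟨i, j, hij, rfl⟩
    have hij' : (i : ℕ) ≤ j := hij
    refine quadVariation.eq_two_of_indicator (a := i + 1) (b := j + 1) (N := m + 2)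
      (Nat.succ_pos _) (Nat.succ_le_succ hij') (by omega) fun k hk => ?_
    unfold zeroPad
    split_ifs <;> simp_all only [Fin.le_def] <;> omega

end EulerForm

theorem positive_roots_An_bound_general (m : ℕ) :
    ∀ β : Fin (m + 1) → ℤ, (∀ k, 0 ≤ β k) →
      ((∑ k, (β k) ^ 2 - ∑ k : Fin m, β k.castSucc * β k.succ
          + β 0 * β (Fin.last m) = 1) ↔
        ∃ i j : Fin (m + 1), i ≤ j ∧ ¬(i = 0 ∧ j = Fin.last m) ∧
          β = fun k => if i ≤ k ∧ k ≤ j then (1 : ℤ) else 0) := by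
  intro β hβ
  change eulerForm β = 1 ↔ _
  rw [eulerForm_eq_one_iff β hβ, quadVariation_zeroPad_eq_two_iff β hβ]
  constructor
  · rintro ⟨hp, i, j, hij, rfl⟩
    refine ⟨i, j, hij, fun ⟨hi, hj⟩ => ?_, rfl⟩
    simp [hi, hj] at hp
  · rintro ⟨i, j, hij, hfull, rfl⟩
    refine ⟨?_, i, j, hij, rfl⟩
    simp only [nonpos_iff_eq_zero, Fin.last_le_iff, Fin.zero_le, Fin.le_last, and_true, true_and]
    split_ifs <;> simp_all

/-- For `T(β) = Σ_{i=1}^{n} β_i² − Σ_{i=1}^{n-1} β_i β_{i+1} + β_1 β_n` on `ℤⁿ`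
(here `n = m + 1` with `m ≥ 2`, so `n ≥ 3`), the positive roots of `T` are exactly the
`Aₙ`-positive roots (indicator vectors of contiguous intervals `[i,j]`) except the full
root `α_1 + ⋯ + α_n`. -/
theorem positive_roots_An_bound (m : ℕ) (hm : 2 ≤ m) :
    ∀ β : Fin (m + 1) → ℤ, (∀ k, 0 ≤ β k) →
      ((∑ k, (β k) ^ 2 - ∑ k : Fin m, β k.castSucc * β k.succ
          + β 0 * β (Fin.last m) = 1) ↔
        ∃ i j : Fin (m + 1), i ≤ j ∧ ¬(i = 0 ∧ j = Fin.last m) ∧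
          β = fun k => if i ≤ k ∧ k ≤ j then (1 : ℤ) else 0) :=
  positive_roots_An_bound_general m
end

section
/- Let M, N, R be finite modules over a finite ring (or finite-dimensional representations over 𝔽_q), and define the Hall number F^R_{M,N} as the number of submodules X ⊆ R with X ≅ N and R/X ≅ M. Then F^R_{M,N} = (|Ext(M,N)_R| / |Hom(M,N)|) · (|Aut(R)| / (|Aut(M)|·|Aut(N)|)), where Ext(M,N)_R ⊆ Ext¹(M,N) is the set of extension classes whose middle term is isomorphic to R. (Riedtmann's formula.) -/
/-!
`Aut R` acts on the short exact sequences `(i, p) : 0 → N → R → M → 0`; the orbits are exactly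
`Ext(M,N)_R`, and the stabilizer of `(i, p)` consists of the shears `1 + i ∘ h ∘ p` with
`h ∈ Hom(M,N)`, so `|SES| · |Hom(M,N)| = |Ext(M,N)_R| · |Aut R|` by orbit–stabilizer.
On the other hand, a sequence is the same as its image `X = range i` together with
isomorphisms `N ≅ X` and `R/X ≅ M`, so `|SES| = F^R_{M,N} · |Aut N| · |Aut M|`.
-/

section Riedtmann

variable (Λ : Type) [Ring Λ] (M N R : Type)
  [AddCommGroup M] [Module Λ M] [AddCommGroup N] [Module Λ N]
  [AddCommGroup R] [Module Λ R]

/-- Short exact sequences `0 → N → R → M → 0` of `Λ`-modules. -/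
def SES : Type :=
  {p : (N →ₗ[Λ] R) × (R →ₗ[Λ] M) //
    Function.Injective p.1 ∧ Function.Surjective p.2 ∧
      LinearMap.range p.1 = LinearMap.ker p.2}

/-- Equivalence of extensions with middle term `R`: an isomorphism of the middle terms
commuting with the inclusions of `N` and the projections onto `M`.  The quotient
`Quot (ExtEquiv Λ M N R)` is the set `Ext(M,N)_R` of extension classes in `Ext¹(M,N)`
whose middle term is isomorphic to `R`. -/
def ExtEquiv (p q : SES Λ M N R) : Prop :=
  ∃ φ : R ≃ₗ[Λ] R, (∀ n, φ (p.1.1 n) = q.1.1 n) ∧ (∀ r, q.1.2 (φ r) = p.1.2 r)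

/-- The submodules counted by the Hall number `F^R_{M,N}`. -/
abbrev HallSubmodule : Type :=
  {X : Submodule Λ R // Nonempty (X ≃ₗ[Λ] N) ∧ Nonempty ((R ⧸ X) ≃ₗ[Λ] M)}

namespace Function.Exact

variable {S A B C D : Type*} [Ring S] [AddCommGroup A] [Module S A] [AddCommGroup B]
  [Module S B] [AddCommGroup C] [Module S C] [AddCommGroup D] [Module S D]
  {f : A →ₗ[S] B} {g : B →ₗ[S] C}

theorem exists_comp_eq_of_comp_eq_zero_of_surjective (h : Exact f g) (hg : Surjective g)
    {u : B →ₗ[S] D} (hu : u ∘ₗ f = 0) : ∃ v : C →ₗ[S] D, v ∘ₗ g = u :=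
  ⟨(LinearMap.range f).liftQ u (LinearMap.range_le_ker_iff.2 hu) ∘ₗ
    (h.linearEquivOfSurjective hg).symm.toLinearMap, by ext; simp⟩

theorem exists_comp_eq_of_comp_eq_zero_of_injective (h : Exact f g) (hf : Injective f)
    {u : D →ₗ[S] B} (hu : g ∘ₗ u = 0) : ∃ v : D →ₗ[S] A, f ∘ₗ v = u :=
  ⟨(LinearEquiv.ofInjective f hf).symm.toLinearMap ∘ₗ
    u.codRestrict (LinearMap.range f) fun d => (h (u d)).1 (LinearMap.congr_fun hu d),
    by ext; simp; rfl⟩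

theorem comp_eq_zero_and_comp_eq_zero_iff (h : Exact f g) (hf : Injective f)
    (hg : Surjective g) {u : B →ₗ[S] B} :
    u ∘ₗ f = 0 ∧ g ∘ₗ u = 0 ↔ ∃ w : C →ₗ[S] A, f ∘ₗ w ∘ₗ g = u := by
  constructor
  · rintro ⟨huf, hgu⟩
    obtain ⟨v, rfl⟩ := h.exists_comp_eq_of_comp_eq_zero_of_surjective hg huf
    have hgv : g ∘ₗ v = 0 := (LinearMap.cancel_right hg).1 hgu
    obtain ⟨w, rfl⟩ := h.exists_comp_eq_of_comp_eq_zero_of_injective hf hgv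
    exact ⟨w, rfl⟩
  · rintro ⟨w, rfl⟩
    have hgf : g ∘ₗ f = 0 := h.linearMap_comp_eq_zero
    constructor
    · rw [LinearMap.comp_assoc, LinearMap.comp_assoc, hgf, LinearMap.comp_zero,
        LinearMap.comp_zero]
    · rw [← LinearMap.comp_assoc, hgf, LinearMap.zero_comp]

end Function.Exact

namespace LinearEquiv

variable {S A B C D : Type*} [Semiring S] [AddCommMonoid A] [Module S A] [AddCommMonoid B]
  [Module S B] [AddCommMonoid C] [Module S C] [AddCommMonoid D] [Module S D]

def equivCongr (e₁ : A ≃ₗ[S] B) (e₂ : C ≃ₗ[S] D) : (A ≃ₗ[S] C) ≃ (B ≃ₗ[S] D) where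
  toFun f := e₁.symm.trans (f.trans e₂)
  invFun f := e₁.trans (f.trans e₂.symm)
  left_inv f := by ext; simp
  right_inv f := by ext; simp

end LinearEquiv

namespace MulAction

noncomputable def prodEquivOfStabilizerEquiv {G X H : Type*} [Group G] [MulAction G X]
    (e : ∀ x : X, H ≃ stabilizer G x) : X × H ≃ orbitRel.Quotient G X × G :=
  calc X × H
      ≃ (Σ ω : orbitRel.Quotient G X, G ⧸ stabilizer G ω.out) × H :=
        (selfEquivSigmaOrbitsQuotientStabilizer G X).prodCongr (Equiv.refl H)
    _ ≃ Σ ω : orbitRel.Quotient G X, (G ⧸ stabilizer G ω.out) × H :=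
        Equiv.sigmaProdDistrib _ _
    _ ≃ Σ _ : orbitRel.Quotient G X, G :=
        Equiv.sigmaCongrRight fun ω =>
          ((Equiv.refl _).prodCongr (e ω.out)).trans
            Subgroup.groupEquivQuotientProdSubgroup.symm
    _ ≃ orbitRel.Quotient G X × G := Equiv.sigmaEquivProd _ _

end MulAction

namespace SES

variable {Λ M N R}

theorem exact (s : SES Λ M N R) : Function.Exact s.1.1 s.1.2 :=
  LinearMap.exact_iff.2 s.2.2.2.symm

instance : MulAction (R ≃ₗ[Λ] R) (SES Λ M N R) where
  smul φ s := ⟨(φ.toLinearMap ∘ₗ s.1.1, s.1.2 ∘ₗ φ.symm.toLinearMap),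
    φ.injective.comp s.2.1, s.2.2.1.comp φ.symm.surjective, by
      rw [LinearMap.range_comp, LinearMap.ker_comp, s.2.2.2,
        ← Submodule.map_equiv_eq_comap_symm]⟩
  one_smul _ := rfl
  mul_smul _ _ _ := rfl

theorem smul_eq_iff (φ : R ≃ₗ[Λ] R) (s t : SES Λ M N R) :
    φ • s = t ↔ (∀ n, φ (s.1.1 n) = t.1.1 n) ∧ ∀ r, t.1.2 (φ r) = s.1.2 r := by
  constructor
  · rintro rfl
    exact ⟨fun n => rfl, fun r => congrArg s.1.2 (φ.symm_apply_apply r)⟩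
  · rintro ⟨hi, hp⟩
    refine Subtype.ext (Prod.ext (LinearMap.ext hi) (LinearMap.ext fun r => ?_))
    change s.1.2 (φ.symm r) = t.1.2 r
    rw [← hp, φ.apply_symm_apply]

theorem extEquiv_iff_orbitRel (s t : SES Λ M N R) :
    ExtEquiv Λ M N R s t ↔ MulAction.orbitRel (R ≃ₗ[Λ] R) (SES Λ M N R) s t := by
  rw [MulAction.orbitRel_apply, MulAction.mem_orbit_symm, MulAction.mem_orbit_iff]
  exact exists_congr fun φ => (smul_eq_iff φ s t).symm

def quotExtEquivEquiv :
    Quot (ExtEquiv Λ M N R) ≃ MulAction.orbitRel.Quotient (R ≃ₗ[Λ] R) (SES Λ M N R) :=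
  Quot.congr (Equiv.refl _) extEquiv_iff_orbitRel

def shear (s : SES Λ M N R) (h : M →ₗ[Λ] N) : R ≃ₗ[Λ] R :=
  LinearEquiv.ofLinearMap (1 + s.1.1 ∘ₗ h ∘ₗ s.1.2) (1 - s.1.1 ∘ₗ h ∘ₗ s.1.2)
    (by ext; simp [s.exact.apply_apply_eq_zero]) (by ext; simp [s.exact.apply_apply_eq_zero])

theorem toLinearMap_shear (s : SES Λ M N R) (h : M →ₗ[Λ] N) :
    (s.shear h).toLinearMap = 1 + s.1.1 ∘ₗ h ∘ₗ s.1.2 := rfl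

theorem shear_mem_stabilizer (s : SES Λ M N R) (h : M →ₗ[Λ] N) :
    s.shear h ∈ MulAction.stabilizer (R ≃ₗ[Λ] R) s :=
  (smul_eq_iff _ s s).2
    ⟨fun n => by simp [shear, s.exact.apply_apply_eq_zero],
      fun r => by simp [shear, s.exact.apply_apply_eq_zero]⟩

noncomputable def homEquivStabilizer (s : SES Λ M N R) :
    (M →ₗ[Λ] N) ≃ MulAction.stabilizer (R ≃ₗ[Λ] R) s := by
  refine Equiv.ofBijective (fun h => ⟨s.shear h, s.shear_mem_stabilizer h⟩) ⟨?_, ?_⟩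
  · intro h h' hh
    have : s.1.1 ∘ₗ h ∘ₗ s.1.2 = s.1.1 ∘ₗ h' ∘ₗ s.1.2 :=
      add_right_injective 1 (congrArg (fun φ => φ.1.toLinearMap) hh)
    exact (LinearMap.cancel_right s.2.2.1).1 ((LinearMap.cancel_left s.2.1).1 this)
  · rintro ⟨φ, hφ⟩
    obtain ⟨hi, hp⟩ := (smul_eq_iff φ s s).1 hφ
    obtain ⟨h, hh⟩ : ∃ h : M →ₗ[Λ] N, s.1.1 ∘ₗ h ∘ₗ s.1.2 = φ.toLinearMap - 1 :=
      (s.exact.comp_eq_zero_and_comp_eq_zero_iff s.2.1 s.2.2.1).1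
        ⟨by ext n; simp [hi], by ext r; simp [hp]⟩
    refine ⟨h, Subtype.ext (LinearEquiv.toLinearMap_injective ?_)⟩
    rw [toLinearMap_shear, hh, add_sub_cancel]

def ofSubmodule (X : Submodule Λ R) (e : N ≃ₗ[Λ] X) (e' : (R ⧸ X) ≃ₗ[Λ] M) :
    SES Λ M N R :=
  ⟨(X.subtype ∘ₗ e.toLinearMap, e'.toLinearMap ∘ₗ X.mkQ),
    X.injective_subtype.comp e.injective, e'.surjective.comp X.mkQ_surjective, by
      rw [LinearMap.range_comp, LinearMap.ker_comp, LinearEquiv.range, LinearEquiv.ker,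
        Submodule.map_subtype_top, Submodule.comap_bot, Submodule.ker_mkQ]⟩

theorem range_ofSubmodule (X : Submodule Λ R) (e : N ≃ₗ[Λ] X) (e' : (R ⧸ X) ≃ₗ[Λ] M) :
    LinearMap.range (ofSubmodule X e e').1.1 = X := by
  change LinearMap.range (X.subtype ∘ₗ e.toLinearMap) = X
  rw [LinearMap.range_comp, LinearEquiv.range, Submodule.map_subtype_top]

noncomputable def fiberRangeEquiv (X : Submodule Λ R) :
    {s : SES Λ M N R // LinearMap.range s.1.1 = X} ≃ (N ≃ₗ[Λ] X) × ((R ⧸ X) ≃ₗ[Λ] M) where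
  toFun s :=
    ((LinearEquiv.ofInjective _ s.1.2.1).trans (LinearEquiv.ofEq _ _ s.2),
      (Submodule.quotEquivOfEq _ _ (s.2.symm.trans s.1.2.2.2)).trans
        (s.1.1.2.quotKerEquivOfSurjective s.1.2.2.1))
  invFun e := ⟨ofSubmodule X e.1 e.2, range_ofSubmodule X e.1 e.2⟩
  left_inv _ :=
    Subtype.ext (Subtype.ext (Prod.ext (LinearMap.ext fun _ => rfl) (LinearMap.ext fun _ => rfl)))
  right_inv e := by
    refine Prod.ext (LinearEquiv.ext fun n => rfl) (LinearEquiv.ext fun x => ?_)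
    obtain ⟨r, rfl⟩ := X.mkQ_surjective x
    rfl

noncomputable def toHallSubmodule (s : SES Λ M N R) : HallSubmodule Λ M N R :=
  ⟨LinearMap.range s.1.1, ⟨(fiberRangeEquiv _ ⟨s, rfl⟩).1.symm⟩,
    ⟨(fiberRangeEquiv _ ⟨s, rfl⟩).2⟩⟩

noncomputable def equivHallSubmoduleProd :
    SES Λ M N R ≃ HallSubmodule Λ M N R × (N ≃ₗ[Λ] N) × (M ≃ₗ[Λ] M) :=
  calc SES Λ M N R
      ≃ Σ X : HallSubmodule Λ M N R, {s : SES Λ M N R // s.toHallSubmodule = X} :=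
        (Equiv.sigmaFiberEquiv _).symm
    _ ≃ Σ _ : HallSubmodule Λ M N R, (N ≃ₗ[Λ] N) × (M ≃ₗ[Λ] M) :=
        Equiv.sigmaCongrRight fun X =>
          ((Equiv.subtypeEquivRight fun _ => Subtype.ext_iff).trans (fiberRangeEquiv X.1)).trans
            (((LinearEquiv.refl Λ N).equivCongr X.2.1.some).prodCongr
              (X.2.2.some.equivCongr (LinearEquiv.refl Λ M)))
    _ ≃ _ := Equiv.sigmaEquivProd _ _

end SES

theorem riedtmann_formula :
    Nat.card {X : Submodule Λ R //
        Nonempty (X ≃ₗ[Λ] N) ∧ Nonempty ((R ⧸ X) ≃ₗ[Λ] M)}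
      * Nat.card (M →ₗ[Λ] N) * Nat.card (M ≃ₗ[Λ] M) * Nat.card (N ≃ₗ[Λ] N)
    = Nat.card (Quot (ExtEquiv Λ M N R)) * Nat.card (R ≃ₗ[Λ] R) := by
  have hSES := Nat.card_congr (SES.equivHallSubmoduleProd : SES Λ M N R ≃ _)
  have hOrbits := Nat.card_congr <| MulAction.prodEquivOfStabilizerEquiv
    (SES.homEquivStabilizer : ∀ s : SES Λ M N R, _)
  simp only [Nat.card_prod] at hSES hOrbits
  rw [Nat.card_congr SES.quotExtEquivEquiv, ← hOrbits, hSES]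
  ring

end Riedtmann
end
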